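/- arXiv:1608.07762 — 3 statements merged into one kernel-verified Lean document; each statement's English description precedes it below -/
import Mathlib

section
/- Let S be a finite set, let B ⊆ T ⊆ S, and let X = {i, j, k} be a set of three distinct elements with B ∩ X = ∅ and X ⊆ T. Then the family { Y : B ⊆ Y ⊆ T and Y ∩ X ≠ ∅ } is the union of the three intervals [B ∪ {i}, T], [B ∪ {j}, T \ {i}], and [B ∪ {k}, T \ {i, j}], and these three intervals are pairwise disjoint. -/
/-- Let `B ⊆ T ⊆ S` be finite sets and `X = {i,j,k}` a set of three distinct
elements with `B ∩ X = ∅` and `X ⊆ T`.  Then the family of sets `Y` with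
`B ⊆ Y ⊆ T` meeting `X` is the disjoint union of the intervals
`[B ∪ {i}, T]`, `[B ∪ {j}, T \ {i}]` and `[B ∪ {k}, T \ {i,j}]`. -/
theorem interval_split_nonempty_inter {α : Type*} [DecidableEq α]
    (S B T : Finset α) (i j k : α)
    (hBT : B ⊆ T) (hTS : T ⊆ S)
    (hij : i ≠ j) (hik : i ≠ k) (hjk : j ≠ k)
    (hBX : B ∩ ({i, j, k} : Finset α) = ∅)
    (hXT : ({i, j, k} : Finset α) ⊆ T) :
    (Finset.Icc B T).filter (fun Y => (Y ∩ ({i, j, k} : Finset α)).Nonempty) =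
      Finset.Icc (insert i B) T ∪ Finset.Icc (insert j B) (T.erase i) ∪
        Finset.Icc (insert k B) ((T.erase i).erase j) ∧
    Disjoint (Finset.Icc (insert i B) T) (Finset.Icc (insert j B) (T.erase i)) ∧
    Disjoint (Finset.Icc (insert i B) T)
      (Finset.Icc (insert k B) ((T.erase i).erase j)) ∧
    Disjoint (Finset.Icc (insert j B) (T.erase i))
      (Finset.Icc (insert k B) ((T.erase i).erase j)) := by
  refine ⟨?_, ?_, ?_, ?_⟩
  · ext Y
    simp only [Finset.mem_filter, Finset.mem_Icc, Finset.mem_union, Finset.le_eq_subset,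
      Finset.insert_subset_iff, Finset.subset_erase, Finset.Nonempty, Finset.mem_inter,
      Finset.mem_insert, Finset.mem_singleton]
    constructor
    · rintro ⟨⟨hBY, hYT⟩, x, hxY, hx⟩
      by_cases hiY : i ∈ Y
      · exact Or.inl (Or.inl ⟨⟨hiY, hBY⟩, hYT⟩)
      · by_cases hjY : j ∈ Y
        · exact Or.inl (Or.inr ⟨⟨hjY, hBY⟩, hYT, hiY⟩)
        · rcases hx with rfl | rfl | rfl
          · exact absurd hxY hiY
          · exact absurd hxY hjY
          · exact Or.inr ⟨⟨hxY, hBY⟩, ⟨hYT, hiY⟩, hjY⟩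
    · rintro ((⟨⟨hiY, hBY⟩, hYT⟩ | ⟨⟨hjY, hBY⟩, hYT, _⟩) | ⟨⟨hkY, hBY⟩, ⟨hYT, _⟩, _⟩)
      · exact ⟨⟨hBY, hYT⟩, i, hiY, Or.inl rfl⟩
      · exact ⟨⟨hBY, hYT⟩, j, hjY, Or.inr (Or.inl rfl)⟩
      · exact ⟨⟨hBY, hYT⟩, k, hkY, Or.inr (Or.inr rfl)⟩
  · rw [Finset.disjoint_left]
    intro Y hY hY'
    simp only [Finset.mem_Icc, Finset.le_eq_subset, Finset.insert_subset_iff,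
      Finset.subset_erase] at hY hY'
    exact hY'.2.2 hY.1.1
  · rw [Finset.disjoint_left]
    intro Y hY hY'
    simp only [Finset.mem_Icc, Finset.le_eq_subset, Finset.insert_subset_iff,
      Finset.subset_erase] at hY hY'
    exact hY'.2.1.2 hY.1.1
  · rw [Finset.disjoint_left]
    intro Y hY hY'
    simp only [Finset.mem_Icc, Finset.le_eq_subset, Finset.insert_subset_iff,
      Finset.subset_erase] at hY hY'
    exact hY'.2.2 hY.1.1
end

section
/- Let S be a finite set, let B ⊆ T ⊆ S, and let X = {i, j, k} be a set of three distinct elements with B ∩ X = ∅ and X ⊆ T. Then the family { Y : B ⊆ Y ⊆ T and X ⊄ Y } is the union of the three intervals [B, T \ {i}], [B ∪ {i}, T \ {j}], and [B ∪ {i, j}, T \ {k}], and these three intervals are pairwise disjoint. -/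
/-- Let `B ⊆ T ⊆ S` be finite sets and `X = {i,j,k}` a set of three distinct
elements with `B ∩ X = ∅` and `X ⊆ T`.  Then the family of sets `Y` with
`B ⊆ Y ⊆ T` not containing all of `X` is the disjoint union of the intervals
`[B, T \ {i}]`, `[B ∪ {i}, T \ {j}]` and `[B ∪ {i,j}, T \ {k}]`. -/
theorem interval_split_not_superset {α : Type*} [DecidableEq α]
    (S B T : Finset α) (i j k : α)
    (hBT : B ⊆ T) (hTS : T ⊆ S)
    (hij : i ≠ j) (hik : i ≠ k) (hjk : j ≠ k)
    (hBX : B ∩ ({i, j, k} : Finset α) = ∅)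
    (hXT : ({i, j, k} : Finset α) ⊆ T) :
    (Finset.Icc B T).filter (fun Y => ¬ ({i, j, k} : Finset α) ⊆ Y) =
      Finset.Icc B (T.erase i) ∪ Finset.Icc (insert i B) (T.erase j) ∪
        Finset.Icc (insert j (insert i B)) (T.erase k) ∧
    Disjoint (Finset.Icc B (T.erase i)) (Finset.Icc (insert i B) (T.erase j)) ∧
    Disjoint (Finset.Icc B (T.erase i))
      (Finset.Icc (insert j (insert i B)) (T.erase k)) ∧
    Disjoint (Finset.Icc (insert i B) (T.erase j))
      (Finset.Icc (insert j (insert i B)) (T.erase k)) := by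
  have hiT : i ∈ T := hXT (by simp)
  have hjT : j ∈ T := hXT (by simp)
  have hkT : k ∈ T := hXT (by simp)
  refine ⟨?_, ?_, ?_, ?_⟩
  · ext Y
    simp only [Finset.mem_filter, Finset.mem_Icc, Finset.mem_union, Finset.le_eq_subset, Finset.singleton_subset_iff,
      Finset.subset_erase, Finset.insert_subset_iff, Finset.mem_insert,
      Finset.mem_singleton]
    constructor
    · rintro ⟨⟨hBY, hYT⟩, hX⟩
      by_cases hi : i ∈ Y
      · by_cases hj : j ∈ Y
        · have hk : k ∉ Y := fun hk => hX ⟨hi, hj, hk⟩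
          exact Or.inr ⟨⟨hj, hi, hBY⟩, hYT, hk⟩
        · exact Or.inl (Or.inr ⟨⟨hi, hBY⟩, hYT, hj⟩)
      · exact Or.inl (Or.inl ⟨hBY, hYT, hi⟩)
    · rintro ((⟨hBY, hYT, hi⟩ | ⟨⟨hi, hBY⟩, hYT, hj⟩) | ⟨⟨hj, hi, hBY⟩, hYT, hk⟩)
      · exact ⟨⟨hBY, hYT⟩, fun h => hi h.1⟩
      · exact ⟨⟨hBY, hYT⟩, fun h => hj h.2.1⟩
      · exact ⟨⟨hBY, hYT⟩, fun h => hk h.2.2⟩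
  · rw [Finset.disjoint_left]
    rintro Y hY hY'
    simp only [Finset.mem_Icc, Finset.le_eq_subset, Finset.singleton_subset_iff, Finset.subset_erase, Finset.insert_subset_iff] at hY hY'
    exact hY.2.2 hY'.1.1
  · rw [Finset.disjoint_left]
    rintro Y hY hY'
    simp only [Finset.mem_Icc, Finset.le_eq_subset, Finset.singleton_subset_iff, Finset.subset_erase, Finset.insert_subset_iff] at hY hY'
    exact hY.2.2 hY'.1.2.1
  · rw [Finset.disjoint_left]
    rintro Y hY hY'
    simp only [Finset.mem_Icc, Finset.le_eq_subset, Finset.singleton_subset_iff, Finset.subset_erase, Finset.insert_subset_iff] at hY hY'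
    exact hY.2.2 hY'.1.1
end

section
/- No R(4,4;3)-good hypergraph on a 12-element set has a transitive automorphism group; that is, for every R(4,4;3)-good hypergraph G on a 12-element set V, the group of permutations of V preserving the edge set of G does not act transitively on V. -/
/-!
Give a set `Q` of four points spanning `e` edges the weight `e * c e`, where `c 1 = c 3 = 2` and
`c 2 = 1`. For a good hypergraph every weight is `2` modulo `4`, so the total weight of the
`choose 12 4 = 495` quadruples is `2` modulo `4`. On the other hand the weight of `Q` is the sum
of `c e` over the points `a ∈ Q` for which `Q \ {a}` is an edge, so the total weight is a sum of
contributions `apexSum a` of the points. These are preserved by automorphisms, hence all equal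
under a transitive group, and the total is `12 * apexSum a₀ ≡ 0` modulo `4`.
-/

/-- A 3-uniform hypergraph `G` on `Fin n` is `R(4,4;3)`-good if every
4-element subset contains at least one and at most three edges of `G`. -/
def IsGood {n : ℕ} (G : Finset (Finset (Fin n))) : Prop :=
  (∀ e ∈ G, e.card = 3) ∧
  ∀ Q : Finset (Fin n), Q.card = 4 →
    1 ≤ (Q.powersetCard 3 ∩ G).card ∧ (Q.powersetCard 3 ∩ G).card ≤ 3

open Finset

namespace Hypergraph

variable {α : Type*} [DecidableEq α]

theorem card_powersetCard_inter_eq_card_filter_erase_mem {k : ℕ} {Q : Finset α}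
    (hQ : #Q = k + 1) (G : Finset (Finset α)) :
    #(Q.powersetCard k ∩ G) = #{a ∈ Q | Q.erase a ∈ G} := by
  symm
  refine card_bij (fun a _ => Q.erase a) (fun a ha => ?_) (fun a ha b hb h => ?_) (fun t ht => ?_)
  · obtain ⟨haQ, haG⟩ := mem_filter.mp ha
    simp [haG, erase_subset, card_erase_of_mem haQ, hQ]
  · exact Q.erase_injOn (mem_filter.mp ha).1 (mem_filter.mp hb).1 h
  · obtain ⟨htQ, htG⟩ := mem_inter.mp ht
    obtain ⟨htQ, htk⟩ := mem_powersetCard.mp htQ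
    obtain ⟨a, hat, rfl⟩ := exists_eq_insert_iff.mpr ⟨htQ, by omega⟩
    exact ⟨a, by simpa [erase_insert hat] using htG, erase_insert hat⟩

section Automorphism

variable {G : Finset (Finset α)} {σ : Equiv.Perm α}

theorem map_mem_iff_of_image_eq (hσ : G.image (fun e => e.image σ) = G) (s : Finset α) :
    s.map σ.toEmbedding ∈ G ↔ s ∈ G := by
  rw [map_eq_image]
  conv_lhs => rw [← hσ]
  exact (image_injective σ.injective).mem_finset_image

theorem card_powersetCard_map_inter (hG : ∀ s, s.map σ.toEmbedding ∈ G ↔ s ∈ G) (k : ℕ)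
    (Q : Finset α) : #((Q.map σ.toEmbedding).powersetCard k ∩ G) = #(Q.powersetCard k ∩ G) :=
  (card_equiv σ.finsetCongr fun t => by simp [hG]).symm

end Automorphism

variable [Fintype α]

def apexSum (G : Finset (Finset α)) (k : ℕ) (f : Finset α → ℕ) (a : α) : ℕ :=
  ∑ Q ∈ univ.powersetCard (k + 1) with a ∈ Q ∧ Q.erase a ∈ G, f Q

theorem sum_card_powersetCard_inter_mul_eq_sum_apexSum (G : Finset (Finset α)) (k : ℕ)
    (f : Finset α → ℕ) :
    ∑ Q ∈ univ.powersetCard (k + 1), #(Q.powersetCard k ∩ G) * f Q = ∑ a, apexSum G k f a := by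
  calc ∑ Q ∈ univ.powersetCard (k + 1), #(Q.powersetCard k ∩ G) * f Q
      = ∑ Q ∈ univ.powersetCard (k + 1), ∑ a ∈ Q with Q.erase a ∈ G, f Q := by
        refine sum_congr rfl fun Q hQ => ?_
        rw [card_powersetCard_inter_eq_card_filter_erase_mem (mem_powersetCard.mp hQ).2,
          sum_const, smul_eq_mul]
    _ = ∑ a, apexSum G k f a := sum_comm' fun Q a => by simp

theorem apexSum_apply {G : Finset (Finset α)} {σ : Equiv.Perm α}
    (hG : ∀ s, s.map σ.toEmbedding ∈ G ↔ s ∈ G) {k : ℕ} {f : Finset α → ℕ}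
    (hf : ∀ Q, f (Q.map σ.toEmbedding) = f Q) (a : α) :
    apexSum G k f (σ a) = apexSum G k f a :=
  (sum_equiv σ.finsetCongr (fun Q => by
      have herase : (Q.map σ.toEmbedding).erase (σ a) = (Q.erase a).map σ.toEmbedding :=
        (map_erase _ _ _).symm
      simp [herase, hG, -map_erase]) fun Q _ => (hf Q).symm).symm

end Hypergraph

theorem Fintype.card_dvd_sum_of_forall_eq {α : Type*} [Fintype α] {f : α → ℕ}
    (hf : ∀ a b, f a = f b) : Fintype.card α ∣ ∑ a, f a := by
  cases isEmpty_or_nonempty α with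
  | inl _ => simp
  | inr h =>
    obtain ⟨a₀⟩ := h
    rw [sum_const_nat fun a _ => hf a a₀]
    exact dvd_mul_right _ _

open Hypergraph in
theorem IsGood.not_transitive {n : ℕ} (hn : 4 ∣ n) (hodd : Odd (n.choose 4))
    {G : Finset (Finset (Fin n))} (hG : IsGood G) :
    ¬ ∀ v w : Fin n, ∃ σ : Equiv.Perm (Fin n), G.image (fun e => e.image σ) = G ∧ σ v = w := by
  intro htrans
  let c : ℕ → ℕ := fun e => if e = 2 then 1 else 2
  let f : Finset (Fin n) → ℕ := fun Q => c #(Q.powersetCard 3 ∩ G)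
  have hmod : (∑ Q ∈ univ.powersetCard 4, #(Q.powersetCard 3 ∩ G) * f Q) % 4 = 2 := by
    rw [sum_nat_mod, Finset.sum_congr rfl (g := fun _ => 2) fun Q hQ => ?_, sum_const,
      card_powersetCard, card_univ, Fintype.card_fin, smul_eq_mul]
    · obtain ⟨m, hm⟩ := hodd
      omega
    · have hgood := hG.2 Q (mem_powersetCard.mp hQ).2
      obtain h | h | h : #(Q.powersetCard 3 ∩ G) = 1 ∨ #(Q.powersetCard 3 ∩ G) = 2 ∨
          #(Q.powersetCard 3 ∩ G) = 3 := by omega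
      all_goals simp [f, c, h]
  have hdvd : 4 ∣ ∑ Q ∈ univ.powersetCard 4, #(Q.powersetCard 3 ∩ G) * f Q := by
    have hconst (v w : Fin n) : apexSum G 3 f v = apexSum G 3 f w := by
      obtain ⟨σ, hσ, rfl⟩ := htrans w v
      have hG' := map_mem_iff_of_image_eq hσ
      exact apexSum_apply hG' (fun Q => congrArg c (card_powersetCard_map_inter hG' 3 Q)) w
    rw [sum_card_powersetCard_inter_mul_eq_sum_apexSum]
    exact hn.trans (by simpa using Fintype.card_dvd_sum_of_forall_eq hconst)
  omega

/-- No `R(4,4;3)`-good hypergraph on a 12-element set has a transitive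
automorphism group: for every good `G` it is not the case that every point
can be mapped to every other point by a permutation preserving the edge set. -/
theorem no_good_12_with_transitive_aut
    (G : Finset (Finset (Fin 12))) (hG : IsGood G) :
    ¬ ∀ v w : Fin 12, ∃ σ : Equiv.Perm (Fin 12),
        G.image (fun e => e.image σ) = G ∧ σ v = w :=
  hG.not_transitive (by norm_num) (by decide)
end
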